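/- Suppose for p = 1 and q ∈ (0,n] the dual Brunn–Minkowski inequality Ṽ_q((1-λ)K + λL)^{1/q} ≥ (1-λ)Ṽ_q(K)^{1/q} + λṼ_q(L)^{1/q} holds for all origin-symmetric convex bodies K, L in ℝⁿ and all λ ∈ [0,1]. Then for every p ≥ 1 the L_p version holds: Ṽ_q((1-λ)K +_p λL)^{p/q} ≥ (1-λ)Ṽ_q(K)^{p/q} + λṼ_q(L)^{p/q} for all origin-symmetric K, L and λ ∈ [0,1]. -/

import Mathlib

open MeasureTheory Real Filter
open scoped RealInnerProductSpace Pointwise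

noncomputable section

/-- Euclidean space ℝⁿ. -/
abbrev E (n : ℕ) := EuclideanSpace ℝ (Fin n)

/-- The unit sphere S^{n-1} as a subset of ℝⁿ. -/
def sph (n : ℕ) : Set (E n) := Metric.sphere 0 1

/-- Support function of a set K: h_K(u) = sup_{y ∈ K} ⟪u, y⟫. -/
def supp {n : ℕ} (K : Set (E n)) (u : E n) : ℝ := sSup ((fun y => ⟪u, y⟫) '' K)

/-- Radial function of a set K: ρ_K(u) = sup {t ≥ 0 : t • u ∈ K}. -/
def rad {n : ℕ} (K : Set (E n)) (u : E n) : ℝ := sSup {t : ℝ | 0 ≤ t ∧ t • u ∈ K}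

/-- q-th dual quermassintegral Ṽ_q(K) = (1/n) ∫_{S^{n-1}} ρ_K^q dH^{n-1}. -/
def Vq {n : ℕ} (q : ℝ) (K : Set (E n)) : ℝ :=
  (1 / (n : ℝ)) * ∫ u in sph n, rad K u ^ q ∂(μH[((n : ℝ) - 1)])

/-- Wulff shape of a function f on the sphere. -/
def wulff {n : ℕ} (f : E n → ℝ) : Set (E n) :=
  {x | ∀ u : E n, ‖u‖ = 1 → ⟪u, x⟫ ≤ f u}

/-- L_p combination (1-λ)K +_p λL, as Wulff shape of the p-mean of support functions. -/
def lpComb {n : ℕ} (p lam : ℝ) (K L : Set (E n)) : Set (E n) :=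
  wulff fun u => ((1 - lam) * supp K u ^ p + lam * supp L u ^ p) ^ (1 / p)

/-- Convex body containing the origin in its interior. -/
def IsBody {n : ℕ} (K : Set (E n)) : Prop :=
  Convex ℝ K ∧ IsCompact K ∧ (0 : E n) ∈ interior K

/-!
Normalize `K̄ = A⁻¹ K`, `L̄ = B⁻¹ L` with `A = Ṽ_q(K)^{1/q}`, `B = Ṽ_q(L)^{1/q}`, and put
`D = (1-λ) A^p + λ B^p`, `m = λ B^p / D`. Since `(1-m) A^{-p} = (1-λ)/D` and `m B^{-p} = λ/D`,
homogeneity of support functions gives `(1-λ)K +_p λL = D^{1/p} ((1-m)K̄ +_p mL̄)`, and the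
power-mean inequality gives `(1-m)K̄ + mL̄ ⊆ (1-m)K̄ +_p mL̄`. The `p = 1` inequality for the
normalized bodies says `Ṽ_q((1-m)K̄ + mL̄) ≥ 1`, so `Ṽ_q((1-λ)K +_p λL) ≥ D^{q/p}`, which is the
claim.

Monotonicity of `Ṽ_q` needs `ρ_M^q` to be integrable on the sphere; for a convex body
`ρ_M = 1 / gauge M` is continuous there, so this holds as soon as the sphere has finite measure.
If its measure is `0` or `∞`, then `Ṽ_q` vanishes on all bodies (in the second case because
`ρ_K^q` is bounded below by a positive constant, hence not integrable, and the Bochner integral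
defaults to `0`), and the inequality is trivial.
-/

open scoped Topology ENNReal
open Bornology Metric Set

section Radial

variable {n : ℕ} {K M : Set (E n)} {u : E n}

lemma measurableSet_sph : MeasurableSet (sph n) := isClosed_sphere.measurableSet

lemma ne_zero_of_mem_sph (hu : u ∈ sph n) : u ≠ 0 := by
  rintro rfl
  simp [sph] at hu

lemma rad_nonneg (K : Set (E n)) (u : E n) : 0 ≤ rad K u :=
  Real.sSup_nonneg fun _ ht => ht.1

lemma bddAbove_radSet (hM : IsBounded M) (hu : u ≠ 0) :
    BddAbove {t : ℝ | 0 ≤ t ∧ t • u ∈ M} := by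
  obtain ⟨R, hR⟩ := hM.subset_closedBall 0
  refine ⟨R / ‖u‖, fun t ⟨ht0, htu⟩ => ?_⟩
  have h := mem_closedBall_zero_iff.1 (hR htu)
  rw [norm_smul, Real.norm_of_nonneg ht0] at h
  exact (le_div_iff₀ (norm_pos_iff.2 hu)).2 h

lemma rad_mono (hKM : K ⊆ M) (hK0 : (0 : E n) ∈ K) (hM : IsBounded M) (hu : u ≠ 0) :
    rad K u ≤ rad M u :=
  csSup_le_csSup (bddAbove_radSet hM hu) ⟨0, le_rfl, by simpa using hK0⟩
    fun _ ht => ⟨ht.1, hKM ht.2⟩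

lemma rad_smul {c : ℝ} (hc : 0 < c) (K : Set (E n)) (u : E n) :
    rad (c • K) u = c * rad K u := by
  have hset :
      {t : ℝ | 0 ≤ t ∧ t • u ∈ c • K} = c • {t : ℝ | 0 ≤ t ∧ t • u ∈ K} := by
    ext t
    simp only [mem_smul_set_iff_inv_smul_mem₀ hc.ne', mem_ofPred_eq, smul_smul, smul_eq_mul]
    exact and_congr_left fun _ => (mul_nonneg_iff_of_pos_left (inv_pos.2 hc)).symm
  rw [rad, hset, Real.sSup_smul_of_nonneg hc.le, smul_eq_mul, rad]

end Radial

section Body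

variable {n : ℕ} {K M : Set (E n)} {u : E n}

lemma IsBody.mem_nhds (hK : IsBody K) : K ∈ 𝓝 0 := mem_interior_iff_mem_nhds.1 hK.2.2

lemma IsBody.zero_mem (hK : IsBody K) : (0 : E n) ∈ K := interior_subset hK.2.2

lemma IsBody.isBounded (hK : IsBody K) : IsBounded K := hK.2.1.isBounded

lemma IsBody.smul (hK : IsBody K) {c : ℝ} (hc : 0 < c) : IsBody (c • K) := by
  refine ⟨hK.1.smul c, hK.2.1.smul c, ?_⟩
  rw [interior_smul₀ hc.ne']
  exact ⟨0, hK.2.2, smul_zero c⟩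

lemma smul_set_eq_neg_of_eq_neg {α β : Type*} [AddGroup β] [DistribSMul α β] {S : Set β}
    (hS : S = -S) (c : α) : c • S = -(c • S) := by
  rw [← smul_set_neg, ← hS]

lemma IsBody.gauge_pos (hM : IsBody M) (hu : u ≠ 0) : 0 < gauge M u :=
  (_root_.gauge_pos (absorbent_nhds_zero hM.mem_nhds)
    ((NormedSpace.isVonNBounded_iff ℝ).2 hM.isBounded)).2 hu

lemma rad_eq_inv_gauge (hM : IsBody M) (hu : u ≠ 0) : rad M u = (gauge M u)⁻¹ := by
  have hg := hM.gauge_pos hu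
  have hset : {t : ℝ | 0 ≤ t ∧ t • u ∈ M} = Icc 0 (gauge M u)⁻¹ := by
    ext t
    refine and_congr_right fun ht0 => ?_
    have hmem := gauge_le_one_iff_mem_closure hM.1 hM.mem_nhds (x := t • u)
    rw [hM.2.1.isClosed.closure_eq] at hmem
    rw [← hmem, gauge_smul_of_nonneg ht0, smul_eq_mul, ← one_div, le_div_iff₀ hg]
  rw [rad, hset, csSup_Icc (inv_pos.2 hg).le]

lemma continuousOn_rad_rpow (hM : IsBody M) (q : ℝ) :
    ContinuousOn (fun u => rad M u ^ q) (sph n) := by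
  have hg : ∀ u ∈ sph n, gauge M u ≠ 0 :=
    fun u hu => (hM.gauge_pos (ne_zero_of_mem_sph hu)).ne'
  have hcont : ContinuousOn (fun u => (gauge M u)⁻¹ ^ q) (sph n) :=
    ((continuous_gauge hM.1 hM.mem_nhds).continuousOn.inv₀ hg).rpow_const
      fun u hu => Or.inl (inv_ne_zero (hg u hu))
  exact hcont.congr fun u hu => by rw [rad_eq_inv_gauge hM (ne_zero_of_mem_sph hu)]

lemma rad_pos (hM : IsBody M) (hu : u ≠ 0) : 0 < rad M u := by
  rw [rad_eq_inv_gauge hM hu]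
  exact inv_pos.2 (hM.gauge_pos hu)

lemma exists_pos_le_rad_rpow (hM : IsBody M) (q : ℝ) :
    ∃ c > 0, ∀ u ∈ sph n, c ≤ rad M u ^ q := by
  rcases (sph n).eq_empty_or_nonempty with h | h
  · exact ⟨1, one_pos, by simp [h]⟩
  obtain ⟨v, hv, hmin⟩ := (isCompact_sphere 0 1).exists_isMinOn h (continuousOn_rad_rpow hM q)
  exact ⟨rad M v ^ q, Real.rpow_pos_of_pos (rad_pos hM (ne_zero_of_mem_sph hv)) q, hmin⟩

lemma integrableOn_rad_rpow {μ : Measure (E n)} (hμ : μ (sph n) ≠ ∞) (hM : IsBody M) (q : ℝ) :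
    IntegrableOn (fun u => rad M u ^ q) (sph n) μ :=
  (continuousOn_rad_rpow hM q).integrableOn_of_subset_isCompact (isCompact_sphere 0 1)
    measurableSet_sph subset_rfl hμ

end Body

section DualQuermassintegral

variable {n : ℕ} {q : ℝ} {K M : Set (E n)}

lemma Vq_nonneg (q : ℝ) (K : Set (E n)) : 0 ≤ Vq q K :=
  mul_nonneg (by positivity)
    (setIntegral_nonneg measurableSet_sph fun u _ => Real.rpow_nonneg (rad_nonneg K u) q)

lemma Vq_smul {c : ℝ} (hc : 0 < c) (q : ℝ) (K : Set (E n)) :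
    Vq q (c • K) = c ^ q * Vq q K := by
  simp only [Vq, rad_smul hc, Real.mul_rpow hc.le (rad_nonneg K _), integral_const_mul]
  ring

lemma Vq_inv_rpow_smul_self (hK : 0 < Vq q K) (hq : q ≠ 0) :
    Vq q ((Vq q K ^ (1 / q))⁻¹ • K) = 1 := by
  rw [Vq_smul (inv_pos.2 (Real.rpow_pos_of_pos hK _)),
    Real.inv_rpow (Real.rpow_nonneg hK.le _), ← Real.rpow_mul hK.le, one_div_mul_cancel hq,
    Real.rpow_one, inv_mul_cancel₀ hK.ne']

lemma Vq_mono (hq : 0 ≤ q) (hfin : μH[((n : ℝ) - 1)] (sph n) ≠ ∞) (hKM : K ⊆ M)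
    (hK0 : (0 : E n) ∈ K) (hM : IsBody M) : Vq q K ≤ Vq q M := by
  refine mul_le_mul_of_nonneg_left ?_ (by positivity)
  refine integral_mono_of_nonneg (.of_forall fun u => Real.rpow_nonneg (rad_nonneg K u) q)
    (integrableOn_rad_rpow hfin hM q) ((ae_restrict_iff' measurableSet_sph).2 (.of_forall ?_))
  exact fun u hu => Real.rpow_le_rpow (rad_nonneg K u)
    (rad_mono hKM hK0 hM.isBounded (ne_zero_of_mem_sph hu)) hq

lemma Vq_pos (hn : n ≠ 0) (h0 : μH[((n : ℝ) - 1)] (sph n) ≠ 0)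
    (hfin : μH[((n : ℝ) - 1)] (sph n) ≠ ∞) (hK : IsBody K) (q : ℝ) : 0 < Vq q K := by
  obtain ⟨c, hc, hcK⟩ := exists_pos_le_rad_rpow hK q
  have hint : (μH[((n : ℝ) - 1)]).real (sph n) * c ≤
      ∫ u in sph n, rad K u ^ q ∂μH[((n : ℝ) - 1)] := by
    rw [← smul_eq_mul, ← setIntegral_const]
    exact setIntegral_mono_on (integrableOn_const hfin) (integrableOn_rad_rpow hfin hK q)
      measurableSet_sph hcK
  have hμ : 0 < (μH[((n : ℝ) - 1)]).real (sph n) := ENNReal.toReal_pos h0 hfin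
  exact mul_pos (by positivity) ((mul_pos hμ hc).trans_le hint)

lemma Vq_eq_zero
    (h : n = 0 ∨ μH[((n : ℝ) - 1)] (sph n) = 0 ∨ μH[((n : ℝ) - 1)] (sph n) = ∞)
    (hK : IsBody K) (q : ℝ) : Vq q K = 0 := by
  rcases h with hn | h0 | hinf
  · simp [Vq, hn]
  · simp [Vq, Measure.restrict_eq_zero.2 h0]
  · obtain ⟨c, hc, hcK⟩ := exists_pos_le_rad_rpow hK q
    refine mul_eq_zero_of_right _ (integral_undef fun hint => ?_)
    have hconst : IntegrableOn (fun _ => c) (sph n) μH[((n : ℝ) - 1)] :=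
      hint.mono' aestronglyMeasurable_const ((ae_restrict_iff' measurableSet_sph).2
        (.of_forall fun u hu => (Real.norm_of_nonneg hc.le).trans_le (hcK u hu)))
    simp [integrableOn_const_iff, hc.ne', hinf] at hconst

end DualQuermassintegral

section LpCombination

variable {n : ℕ} {K L : Set (E n)} {p lam : ℝ}

lemma le_supp (hK : IsCompact K) {y : E n} (hy : y ∈ K) (u : E n) : ⟪u, y⟫ ≤ supp K u :=
  le_csSup (hK.image (continuous_const.inner continuous_id)).bddAbove (mem_image_of_mem _ hy)

lemma supp_nonneg (hK : IsCompact K) (hK0 : (0 : E n) ∈ K) (u : E n) : 0 ≤ supp K u := by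
  simpa using le_supp hK hK0 u

lemma supp_le_of_subset_closedBall (hK0 : K.Nonempty) {R : ℝ} (hKR : K ⊆ closedBall 0 R)
    {u : E n} (hu : ‖u‖ = 1) : supp K u ≤ R := by
  refine csSup_le (hK0.image _) ?_
  rintro _ ⟨y, hy, rfl⟩
  calc ⟪u, y⟫ ≤ ‖u‖ * ‖y‖ := real_inner_le_norm u y
    _ ≤ R := by rw [hu, one_mul]; exact mem_closedBall_zero_iff.1 (hKR hy)

lemma supp_smul {c : ℝ} (hc : 0 ≤ c) (K : Set (E n)) (u : E n) :
    supp (c • K) u = c * supp K u := by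
  have h : (fun y => ⟪u, y⟫) = innerSL ℝ u :=
    funext fun y => (innerSL_apply_apply ℝ u y).symm
  rw [supp, supp, h, image_smul_set, Real.sSup_smul_of_nonneg hc, smul_eq_mul]

lemma wulff_eq_biInter (f : E n → ℝ) :
    wulff f = ⋂ u ∈ {u : E n | ‖u‖ = 1}, {x | ⟪u, x⟫ ≤ f u} := by
  ext
  simp [wulff]

lemma convex_wulff (f : E n → ℝ) : Convex ℝ (wulff f) := by
  rw [wulff_eq_biInter]
  exact convex_iInter₂ fun u _ => convex_halfSpace_le (innerSL ℝ u).isLinear (f u)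

lemma isClosed_wulff (f : E n → ℝ) : IsClosed (wulff f) := by
  rw [wulff_eq_biInter]
  exact isClosed_biInter fun u _ => isClosed_le (continuous_const.inner continuous_id)
    continuous_const

lemma wulff_subset_closedBall {f : E n → ℝ} {R : ℝ} (hR : 0 ≤ R)
    (hf : ∀ u : E n, ‖u‖ = 1 → f u ≤ R) : wulff f ⊆ closedBall 0 R := by
  intro x hx
  rw [mem_closedBall_zero_iff]
  rcases eq_or_ne x 0 with rfl | hx0
  · simpa using hR
  have hnx : 0 < ‖x‖ := norm_pos_iff.2 hx0
  have hu : ‖‖x‖⁻¹ • x‖ = 1 := by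
    rw [norm_smul, norm_inv, norm_norm, inv_mul_cancel₀ hnx.ne']
  have h := hx _ hu
  rw [real_inner_smul_left, real_inner_self_eq_norm_sq, sq, ← mul_assoc,
    inv_mul_cancel₀ hnx.ne', one_mul] at h
  exact h.trans (hf _ hu)

lemma wulff_const_mul {c : ℝ} (hc : 0 < c) (f : E n → ℝ) :
    wulff (fun u => c * f u) = c • wulff f := by
  ext x
  simp only [mem_smul_set_iff_inv_smul_mem₀ hc.ne', wulff, mem_ofPred_eq,
    real_inner_smul_right]
  exact forall₂_congr fun u _ => (inv_mul_le_iff₀ hc).symm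

lemma arith_mean_le_rpow_mean_two {w a b : ℝ} (hw : w ∈ Icc (0 : ℝ) 1) (ha : 0 ≤ a)
    (hb : 0 ≤ b) (hp : 1 ≤ p) :
    (1 - w) * a + w * b ≤ ((1 - w) * a ^ p + w * b ^ p) ^ (1 / p) := by
  have hw1 : 0 ≤ 1 - w := sub_nonneg.2 hw.2
  rw [one_div, Real.le_rpow_inv_iff_of_pos
    (add_nonneg (mul_nonneg hw1 ha) (mul_nonneg hw.1 hb))
    (add_nonneg (mul_nonneg hw1 (by positivity)) (mul_nonneg hw.1 (by positivity)))
    (one_pos.trans_le hp)]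
  simpa using (convexOn_rpow hp).2 (mem_Ici.2 ha) (mem_Ici.2 hb) hw1 hw.1 (by ring)

lemma add_subset_lpComb (hp : 1 ≤ p) (hlam : lam ∈ Icc (0 : ℝ) 1) (hK : IsCompact K)
    (hK0 : (0 : E n) ∈ K) (hL : IsCompact L) (hL0 : (0 : E n) ∈ L) :
    (1 - lam) • K + lam • L ⊆ lpComb p lam K L := by
  rintro _ ⟨_, ⟨k, hk, rfl⟩, _, ⟨l, hl, rfl⟩, rfl⟩ u -
  rw [inner_add_right, real_inner_smul_right, real_inner_smul_right]
  calc (1 - lam) * ⟪u, k⟫ + lam * ⟪u, l⟫ ≤ (1 - lam) * supp K u + lam * supp L u :=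
        add_le_add (mul_le_mul_of_nonneg_left (le_supp hK hk u) (sub_nonneg.2 hlam.2))
          (mul_le_mul_of_nonneg_left (le_supp hL hl u) hlam.1)
    _ ≤ _ := arith_mean_le_rpow_mean_two hlam (supp_nonneg hK hK0 u) (supp_nonneg hL hL0 u) hp

lemma lpComb_eq_smul_lpComb_smul {m a b t : ℝ} (hm : m ∈ Icc (0 : ℝ) 1)
    (ha : 0 ≤ a) (hb : 0 ≤ b) (ht : 0 < t) (hK : IsCompact K) (hK0 : (0 : E n) ∈ K)
    (hL : IsCompact L) (hL0 : (0 : E n) ∈ L)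
    (hma : t * ((1 - m) * a ^ p) = 1 - lam) (hmb : t * (m * b ^ p) = lam) :
    lpComb p lam K L = t ^ (1 / p) • lpComb p m (a • K) (b • L) := by
  rw [lpComb, lpComb, ← wulff_const_mul (Real.rpow_pos_of_pos ht _)]
  congr 1
  funext u
  have hKu := supp_nonneg hK hK0 u
  have hLu := supp_nonneg hL hL0 u
  have hX : 0 ≤ (1 - m) * (a ^ p * supp K u ^ p) + m * (b ^ p * supp L u ^ p) :=
    add_nonneg (mul_nonneg (sub_nonneg.2 hm.2) (by positivity)) (mul_nonneg hm.1 (by positivity))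
  rw [supp_smul ha, supp_smul hb, Real.mul_rpow ha hKu, Real.mul_rpow hb hLu,
    ← Real.mul_rpow ht.le hX, ← hma, ← hmb]
  ring_nf

lemma sub_smul_add_smul_mem_nhds_zero {F : Type*} [NormedAddCommGroup F] [NormedSpace ℝ F]
    {K L : Set F} (hK : K ∈ 𝓝 0) (hL : L ∈ 𝓝 0) (hlam : lam ∈ Icc (0 : ℝ) 1) :
    (1 - lam) • K + lam • L ∈ 𝓝 (0 : F) := by
  obtain ⟨ε, hε, hεKL⟩ := Metric.mem_nhds_iff.1 (inter_mem hK hL)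
  refine mem_of_superset (ball_mem_nhds 0 hε) ?_
  calc ball (0 : F) ε = (1 - lam + lam) • ball (0 : F) ε := by rw [sub_add_cancel, one_smul]
    _ = (1 - lam) • ball 0 ε + lam • ball 0 ε :=
        (convex_ball 0 ε).add_smul (sub_nonneg.2 hlam.2) hlam.1
    _ ⊆ (1 - lam) • K + lam • L :=
        add_subset_add (smul_set_mono (hεKL.trans inter_subset_left))
          (smul_set_mono (hεKL.trans inter_subset_right))

lemma IsBody.lpComb (hp : 1 ≤ p) (hlam : lam ∈ Icc (0 : ℝ) 1) (hK : IsBody K)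
    (hL : IsBody L) : IsBody (lpComb p lam K L) := by
  obtain ⟨R, hR⟩ := (hK.isBounded.union hL.isBounded).subset_closedBall 0
  have hR0 : 0 ≤ R := by simpa using hR (Or.inl hK.zero_mem)
  have hbound : ∀ u : E n, ‖u‖ = 1 →
      ((1 - lam) * supp K u ^ p + lam * supp L u ^ p) ^ (1 / p) ≤ R := by
    intro u hu
    have hKu := supp_le_of_subset_closedBall ⟨0, hK.zero_mem⟩ (subset_union_left.trans hR) hu
    have hLu := supp_le_of_subset_closedBall ⟨0, hL.zero_mem⟩ (subset_union_right.trans hR) hu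
    have hKu0 := supp_nonneg hK.2.1 hK.zero_mem u
    have hLu0 := supp_nonneg hL.2.1 hL.zero_mem u
    have hlam0 := hlam.1
    have hlam1 := sub_nonneg.2 hlam.2
    calc _ ≤ ((1 - lam) * R ^ p + lam * R ^ p) ^ (1 / p) := by gcongr
      _ = R := by
        rw [← add_mul, sub_add_cancel, one_mul, ← Real.rpow_mul hR0,
          mul_one_div_cancel (one_pos.trans_le hp).ne', Real.rpow_one]
  refine ⟨convex_wulff _, isCompact_of_isClosed_isBounded (isClosed_wulff _)
    (isBounded_closedBall.subset (wulff_subset_closedBall hR0 hbound)), ?_⟩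
  rw [mem_interior_iff_mem_nhds]
  exact mem_of_superset (sub_smul_add_smul_mem_nhds_zero hK.mem_nhds hL.mem_nhds hlam)
    (add_subset_lpComb hp hlam hK.2.1 hK.zero_mem hL.2.1 hL.zero_mem)

end LpCombination

lemma exists_lpComb_weight {A B lam : ℝ} (p : ℝ) (hA : 0 < A) (hB : 0 < B)
    (hlam : lam ∈ Icc (0 : ℝ) 1) :
    0 < (1 - lam) * A ^ p + lam * B ^ p ∧ ∃ m ∈ Icc (0 : ℝ) 1,
      ((1 - lam) * A ^ p + lam * B ^ p) * ((1 - m) * A⁻¹ ^ p) = 1 - lam ∧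
      ((1 - lam) * A ^ p + lam * B ^ p) * (m * B⁻¹ ^ p) = lam := by
  obtain ⟨h0, h1⟩ := hlam
  have hAp := Real.rpow_pos_of_pos hA p
  have hBp := Real.rpow_pos_of_pos hB p
  have hD : 0 < (1 - lam) * A ^ p + lam * B ^ p := by
    rcases le_total (A ^ p) (B ^ p) with h | h
    · nlinarith [mul_nonneg h0 (sub_nonneg.2 h)]
    · nlinarith [mul_nonneg (sub_nonneg.2 h1) (sub_nonneg.2 h)]
  refine ⟨hD, lam * B ^ p / ((1 - lam) * A ^ p + lam * B ^ p),
    ⟨by positivity, div_le_one_of_le₀ (by nlinarith) hD.le⟩, ?_, ?_⟩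
  · rw [Real.inv_rpow hA.le]
    field_simp
    ring
  · rw [Real.inv_rpow hB.le]
    field_simp

lemma lpComb_dual_brunn_minkowski_of_normalized {n : ℕ} {q p lam : ℝ} {K L : Set (E n)}
    (hq : 0 < q) (hfin : μH[((n : ℝ) - 1)] (sph n) ≠ ∞) (hp : 1 ≤ p)
    (hlam : lam ∈ Icc (0 : ℝ) 1) (hK : IsBody K) (hL : IsBody L) (hVK : 0 < Vq q K)
    (hVL : 0 < Vq q L)
    (hBM : ∀ m ∈ Icc (0 : ℝ) 1,
      1 ≤ Vq q ((1 - m) • ((Vq q K ^ (1 / q))⁻¹ • K) + m • ((Vq q L ^ (1 / q))⁻¹ • L))) :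
    (1 - lam) * Vq q K ^ (p / q) + lam * Vq q L ^ (p / q) ≤
      Vq q (lpComb p lam K L) ^ (p / q) := by
  set A := Vq q K ^ (1 / q)
  set B := Vq q L ^ (1 / q)
  have hA : 0 < A := Real.rpow_pos_of_pos hVK _
  have hB : 0 < B := Real.rpow_pos_of_pos hVL _
  obtain ⟨hD, m, hm, hmA, hmB⟩ := exists_lpComb_weight p hA hB hlam
  set D := (1 - lam) * A ^ p + lam * B ^ p
  have hK' := hK.smul (inv_pos.2 hA)
  have hL' := hL.smul (inv_pos.2 hB)
  have hD_le : D ^ (q / p) ≤ Vq q (lpComb p lam K L) := calc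
    D ^ (q / p) = (D ^ (1 / p)) ^ q * 1 := by
      rw [mul_one, ← Real.rpow_mul hD.le, one_div_mul_eq_div]
    _ ≤ (D ^ (1 / p)) ^ q * Vq q (lpComb p m (A⁻¹ • K) (B⁻¹ • L)) := by
      gcongr
      exact (hBM m hm).trans (Vq_mono hq.le hfin
        (add_subset_lpComb hp hm hK'.2.1 hK'.zero_mem hL'.2.1 hL'.zero_mem)
        (mem_of_mem_nhds (sub_smul_add_smul_mem_nhds_zero hK'.mem_nhds hL'.mem_nhds hm))
        (hK'.lpComb hp hm hL'))
    _ = Vq q (lpComb p lam K L) := by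
      rw [lpComb_eq_smul_lpComb_smul hm (inv_pos.2 hA).le (inv_pos.2 hB).le hD hK.2.1
        hK.zero_mem hL.2.1 hL.zero_mem hmA hmB, Vq_smul (Real.rpow_pos_of_pos hD _)]
  have hlhs : (1 - lam) * Vq q K ^ (p / q) + lam * Vq q L ^ (p / q) = D := by
    simp only [D, A, B, ← Real.rpow_mul (Vq_nonneg q _), one_div_mul_eq_div]
  rw [hlhs, ← inv_div, Real.le_rpow_inv_iff_of_pos hD.le (Vq_nonneg q _) (by positivity)]
  exact hD_le

theorem stmt8_general {n : ℕ} (q : ℝ) (hq0 : 0 < q)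
    (hBM1 : ∀ K L : Set (E n), IsBody K → K = -K → IsBody L → L = -L →
      ∀ lam ∈ Set.Icc (0:ℝ) 1,
        (1 - lam) * Vq q K ^ ((1:ℝ) / q) + lam * Vq q L ^ ((1:ℝ) / q) ≤
          Vq q ((1 - lam) • K + lam • L) ^ ((1:ℝ) / q)) :
    ∀ p : ℝ, 1 ≤ p → ∀ K L : Set (E n), IsBody K → K = -K → IsBody L → L = -L →
      ∀ lam ∈ Set.Icc (0:ℝ) 1,
        (1 - lam) * Vq q K ^ (p / q) + lam * Vq q L ^ (p / q) ≤
          Vq q (lpComb p lam K L) ^ (p / q) := by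
  intro p hp K L hK hKsym hL hLsym lam hlam
  by_cases hdeg : n = 0 ∨ μH[((n : ℝ) - 1)] (sph n) = 0 ∨ μH[((n : ℝ) - 1)] (sph n) = ∞
  · rw [Vq_eq_zero hdeg hK, Vq_eq_zero hdeg hL, Real.zero_rpow (by positivity)]
    simpa using Real.rpow_nonneg (Vq_nonneg q _) (p / q)
  simp only [not_or] at hdeg
  obtain ⟨hn, hμ0, hμ⟩ := hdeg
  have hVK := Vq_pos hn hμ0 hμ hK q
  have hVL := Vq_pos hn hμ0 hμ hL q
  refine lpComb_dual_brunn_minkowski_of_normalized hq0 hμ hp hlam hK hL hVK hVL fun m hm => ?_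
  have hK' := hK.smul (inv_pos.2 (Real.rpow_pos_of_pos hVK (1 / q)))
  have hL' := hL.smul (inv_pos.2 (Real.rpow_pos_of_pos hVL (1 / q)))
  have h := hBM1 _ _ hK' (smul_set_eq_neg_of_eq_neg hKsym _) hL'
    (smul_set_eq_neg_of_eq_neg hLsym _) m hm
  rw [Vq_inv_rpow_smul_self hVK hq0.ne', Vq_inv_rpow_smul_self hVL hq0.ne', Real.one_rpow,
    mul_one, mul_one, sub_add_cancel, one_div, Real.le_rpow_inv_iff_of_pos zero_le_one
    (Vq_nonneg q _) hq0, Real.one_rpow] at h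
  simpa only [one_div] using h

/-- if the (p = 1) dual Brunn–Minkowski inequality holds for all origin-symmetric
convex bodies and q ∈ (0,n], then the L_p version holds for every p ≥ 1. -/
theorem stmt8 {n : ℕ} (hn : 2 ≤ n) (q : ℝ) (hq0 : 0 < q) (hqn : q ≤ n)
    (hBM1 : ∀ K L : Set (E n), IsBody K → K = -K → IsBody L → L = -L →
      ∀ lam ∈ Set.Icc (0:ℝ) 1,
        (1 - lam) * Vq q K ^ ((1:ℝ) / q) + lam * Vq q L ^ ((1:ℝ) / q) ≤
          Vq q ((1 - lam) • K + lam • L) ^ ((1:ℝ) / q)) :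
    ∀ p : ℝ, 1 ≤ p → ∀ K L : Set (E n), IsBody K → K = -K → IsBody L → L = -L →
      ∀ lam ∈ Set.Icc (0:ℝ) 1,
        (1 - lam) * Vq q K ^ (p / q) + lam * Vq q L ^ (p / q) ≤
          Vq q (lpComb p lam K L) ^ (p / q) :=
  stmt8_general q hq0 hBM1
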